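/- For any graph G and any integer m ≥ 1, the linear MIM-width of the m-th power of G is at most twice the linear MIM-width of G, i.e., lmw(Gᵐ) ≤ 2·lmw(G). -/

import Mathlib

open scoped Classical

noncomputable section

namespace LMW

variable {V : Type*} [Fintype V]

/-- The bipartite graph `G[Vᵢ, V̄ᵢ]` consisting of the edges of `G` crossing the cut at
position `i` of the linear layout `σ` (here `Vᵢ` is the set of the first `i` vertices
in the layout). -/
def cutGraph (G : SimpleGraph V) (σ : V ≃ Fin (Fintype.card V)) (i : ℕ) : SimpleGraph V where
  Adj u v := G.Adj u v ∧
    (((σ u : ℕ) < i ∧ i ≤ (σ v : ℕ)) ∨ ((σ v : ℕ) < i ∧ i ≤ (σ u : ℕ)))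
  symm := by
    constructor
    intro u v h
    exact ⟨h.1.symm, h.2.symm⟩
  loopless := by
    constructor
    intro u h
    exact G.loopless.irrefl u h.1

/-- `M` is an induced matching in `H`: a set of edges of `H` such that any two distinct
edges of `M` share no endpoint and no endpoint of one is adjacent in `H` to an endpoint
of the other. -/
def IsInducedMatching (H : SimpleGraph V) (M : Finset (Sym2 V)) : Prop :=
  (↑M : Set (Sym2 V)) ⊆ H.edgeSet ∧
    ∀ e ∈ M, ∀ f ∈ M, e ≠ f → ∀ u ∈ e, ∀ v ∈ f, u ≠ v ∧ ¬ H.Adj u v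

/-- `mim H` is the size of a maximum induced matching of `H`. -/
def mim (H : SimpleGraph V) : ℕ :=
  sSup {n : ℕ | ∃ M : Finset (Sym2 V), IsInducedMatching H M ∧ M.card = n}

/-- The MIM-width of `G` under the linear layout `σ`: the maximum over all cuts
`1 ≤ i < |V|` of the size of a maximum induced matching of the cut graph. -/
def mw (G : SimpleGraph V) (σ : V ≃ Fin (Fintype.card V)) : ℕ :=
  (Finset.Ico 1 (Fintype.card V)).sup fun i => mim (cutGraph G σ i)

/-- The linear MIM-width of `G`: the minimum of `mw G σ` over all linear layouts `σ`. -/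
def lmw (G : SimpleGraph V) : ℕ :=
  sInf {m : ℕ | ∃ σ : V ≃ Fin (Fintype.card V), mw G σ = m}

/-- The `m`-th power of a graph: two distinct vertices are adjacent iff their distance
in `G` is at most `m`. -/
def graphPow (G : SimpleGraph V) (m : ℕ) : SimpleGraph V where
  Adj u v := u ≠ v ∧ G.edist u v ≤ m
  symm := by
    constructor
    intro u v h
    refine ⟨h.1.symm, ?_⟩
    rw [SimpleGraph.edist_comm]
    exact h.2
  loopless := by
    constructor
    intro u h
    exact h.1 rfl

/-! Fix a layout and one of its cuts `(S, S̄)`. An edge `ab` of `Gᵐ` with `a ∈ S`, `b ∉ S`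
lies at distance `≤ m` in `G`, so a shortest `a`–`b` walk leaves `S` along some edge `uv` of `G`,
after `t` steps; assign `uv` to `ab`. Take an induced matching of the cut graph of `Gᵐ` and split
it according to the parity of `t`. Within one class, if the assigned edges `u₁v₁` and `u₂v₂`
touched or were joined by an edge of the cut graph of `G`, then `d(u₁, v₂) ≤ 1` (say), hence
`d(u₂, v₁) ≤ 3`, and one of `a₁b₂`, `a₂b₁` would be an edge of `Gᵐ` across the cut: the
lengths only leave room for the case `t₁ = t₂ + 1`, which the parity excludes. So each class
yields an induced matching of the cut graph of `G`, and every cut of `Gᵐ` has `mim` at most twice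
the `mim` of the same cut of `G`. -/

open SimpleGraph

section Walks

variable {α : Type*} {G : SimpleGraph α}

/-- The edge `uv` of `G` leaves `s` on a route `a ⋯ u — v ⋯ b` of length at most `m`,
at most `t` steps away from `a`. -/
def IsExitEdge (G : SimpleGraph α) (s : Set α) (m : ℕ) (a b u v : α) (t : ℕ) : Prop :=
  u ∈ s ∧ v ∉ s ∧ G.Adj u v ∧ G.edist a u ≤ t ∧ ∃ β : ℕ, G.edist v b ≤ β ∧ t + 1 + β ≤ m

theorem exists_isExitEdge_of_walk {s : Set α} :
    ∀ {a b : α} (p : G.Walk a b), a ∈ s → b ∉ s →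
      ∃ u v t, IsExitEdge G s p.length a b u v t
  | _, _, .nil, ha, hb => absurd ha hb
  | a, b, .cons (v := c) hac q, ha, hb => by
    by_cases hc : c ∈ s
    · obtain ⟨u, v, t, hu, hv, huv, hcu, β, hvb, hlen⟩ := exists_isExitEdge_of_walk q hc hb
      have hau : G.edist a u ≤ (t + 1 : ℕ) := calc
        G.edist a u ≤ G.edist a c + G.edist c u := SimpleGraph.edist_triangle
        _ ≤ 1 + t := by gcongr; exact (edist_eq_one_iff_adj.2 hac).le
        _ = (t + 1 : ℕ) := by push_cast; ring
      exact ⟨u, v, t + 1, hu, hv, huv, hau, β, hvb, by rw [Walk.length_cons]; omega⟩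
    · exact ⟨a, c, 0, ha, hc, hac, by simp, q.length, q.edist_le,
        by rw [Walk.length_cons]; omega⟩

theorem exists_isExitEdge_of_edist_le {s : Set α} {m : ℕ} {a b : α} (ha : a ∈ s) (hb : b ∉ s)
    (hab : G.edist a b ≤ m) : ∃ u v t, IsExitEdge G s m a b u v t := by
  obtain ⟨p, hp⟩ := exists_walk_of_edist_ne_top (ne_top_of_le_ne_top (by simp) hab)
  obtain ⟨u, v, t, hu, hv, huv, hau, β, hvb, hlen⟩ := exists_isExitEdge_of_walk p ha hb
  have : p.length ≤ m := by exact_mod_cast hp ▸ hab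
  exact ⟨u, v, t, hu, hv, huv, hau, β, hvb, hlen.trans this⟩

theorem edist_le_add_add (a u v b : α) :
    G.edist a b ≤ G.edist a u + G.edist u v + G.edist v b :=
  SimpleGraph.edist_triangle.trans <| by rw [add_assoc]; gcongr; exact SimpleGraph.edist_triangle

theorem IsExitEdge.between_adj {s : Set α} {m t : ℕ} {a b u v : α}
    (h : IsExitEdge G s m a b u v t) : (G.between s sᶜ).Adj u v :=
  ⟨h.2.2.1, .inl ⟨h.1, h.2.1⟩⟩

theorem IsExitEdge.edist_le_or_edist_le {s : Set α} {m t₁ t₂ : ℕ} {a₁ b₁ u₁ v₁ a₂ b₂ u₂ v₂ : α}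
    (h₁ : IsExitEdge G s m a₁ b₁ u₁ v₁ t₁) (h₂ : IsExitEdge G s m a₂ b₂ u₂ v₂ t₂)
    (ht : t₁ % 2 = t₂ % 2) (h : G.edist u₁ v₂ ≤ 1) :
    G.edist a₁ b₂ ≤ m ∨ G.edist a₂ b₁ ≤ m := by
  obtain ⟨-, -, huv₁, hau₁, β₁, hvb₁, hlen₁⟩ := h₁
  obtain ⟨-, -, huv₂, hau₂, β₂, hvb₂, hlen₂⟩ := h₂
  have h' : G.edist u₂ v₁ ≤ 3 := calc
    G.edist u₂ v₁ ≤ G.edist u₂ v₂ + G.edist v₂ u₁ + G.edist u₁ v₁ := edist_le_add_add _ _ _ _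
    _ ≤ 1 + 1 + 1 := by
      gcongr
      · exact (edist_eq_one_iff_adj.2 huv₂).le
      · rwa [edist_comm]
      · exact (edist_eq_one_iff_adj.2 huv₁).le
    _ = 3 := by norm_num
  have h₁₂ : G.edist a₁ b₂ ≤ (t₁ + 1 + β₂ : ℕ) := calc
    G.edist a₁ b₂ ≤ G.edist a₁ u₁ + G.edist u₁ v₂ + G.edist v₂ b₂ := edist_le_add_add _ _ _ _
    _ ≤ t₁ + 1 + β₂ := by gcongr
    _ = (t₁ + 1 + β₂ : ℕ) := by push_cast; rfl
  have h₂₁ : G.edist a₂ b₁ ≤ (t₂ + 3 + β₁ : ℕ) := calc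
    G.edist a₂ b₁ ≤ G.edist a₂ u₂ + G.edist u₂ v₁ + G.edist v₁ b₁ := edist_le_add_add _ _ _ _
    _ ≤ t₂ + 3 + β₁ := by gcongr
    _ = (t₂ + 3 + β₁ : ℕ) := by push_cast; rfl
  -- if both bounds exceed `m`, then `t₁ = t₂ + 1`
  rcases (by omega : t₁ + 1 + β₂ ≤ m ∨ t₂ + 3 + β₁ ≤ m) with h | h
  · exact .inl (h₁₂.trans (by exact_mod_cast h))
  · exact .inr (h₂₁.trans (by exact_mod_cast h))

theorem IsExitEdge.edist_le_one_or_edist_le_one {s : Set α} {m t₁ t₂ : ℕ}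
    {a₁ b₁ u₁ v₁ a₂ b₂ u₂ v₂ w w' : α}
    (h₁ : IsExitEdge G s m a₁ b₁ u₁ v₁ t₁) (h₂ : IsExitEdge G s m a₂ b₂ u₂ v₂ t₂)
    (hw : w ∈ s(u₁, v₁)) (hw' : w' ∈ s(u₂, v₂)) (h : w = w' ∨ (G.between s sᶜ).Adj w w') :
    G.edist u₁ v₂ ≤ 1 ∨ G.edist u₂ v₁ ≤ 1 := by
  obtain ⟨hu₁, hv₁, huv₁, -⟩ := h₁
  obtain ⟨hu₂, hv₂, huv₂, -⟩ := h₂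
  simp only [edist_le_one_iff_adj_or_eq, SimpleGraph.between_adj, Sym2.mem_iff,
    Set.mem_compl_iff] at hw hw' h ⊢
  grind [SimpleGraph.Adj.symm]

end Walks

theorem exists_eq_mk_of_mem_edgeSet_between {α : Type*} {K : SimpleGraph α}
    {s : Set α} {e : Sym2 α} (he : e ∈ (K.between s sᶜ).edgeSet) :
    ∃ a b, e = s(a, b) ∧ a ∈ s ∧ b ∉ s ∧ K.Adj a b := by
  induction e using Sym2.ind with
  | _ x y =>
    obtain ⟨hxy, ⟨hx, hy⟩ | ⟨hx, hy⟩⟩ := he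
    · exact ⟨x, y, rfl, hx, hy, hxy⟩
    · exact ⟨y, x, Sym2.eq_swap, hy, hx, hxy.symm⟩

theorem mim_le {α : Type*} {H : SimpleGraph α} {n : ℕ}
    (h : ∀ M, IsInducedMatching H M → M.card ≤ n) : mim H ≤ n :=
  csSup_le ⟨0, ∅, ⟨by simp, by simp⟩, rfl⟩ (by rintro _ ⟨M, hM, rfl⟩; exact h M hM)

theorem IsInducedMatching.card_le_mim {H : SimpleGraph V} {M : Finset (Sym2 V)}
    (hM : IsInducedMatching H M) : M.card ≤ mim H :=
  le_csSup ⟨Fintype.card (Sym2 V), by rintro _ ⟨N, -, rfl⟩; exact N.card_le_univ⟩ ⟨M, hM, rfl⟩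

theorem card_le_mim_of_separated {ι : Type*} {H : SimpleGraph V} (S : Finset ι)
    (F : ι → Sym2 V) (hF : ∀ i ∈ S, F i ∈ H.edgeSet)
    (hsep : ∀ i ∈ S, ∀ j ∈ S, i ≠ j → ∀ w ∈ F i, ∀ w' ∈ F j, w ≠ w' ∧ ¬ H.Adj w w') :
    S.card ≤ mim H := by
  have hinj : Set.InjOn F S := fun i hi j hj hij => by
    by_contra hne
    exact (hsep i hi j hj hne _ (F i).out_fst_mem _ (hij ▸ (F i).out_fst_mem)).1 rfl
  rw [← Finset.card_image_of_injOn hinj]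
  refine IsInducedMatching.card_le_mim ⟨?_, ?_⟩
  · simpa [Set.subset_def] using hF
  · simp only [Finset.mem_image]
    rintro _ ⟨i, hi, rfl⟩ _ ⟨j, hj, rfl⟩ hij
    exact hsep i hi j hj (ne_of_apply_ne F hij)

theorem card_le_two_mul_mim_of_coloring {ι : Type*} [Fintype ι] {H : SimpleGraph V}
    (F : ι → Sym2 V) (c : ι → Bool) (hF : ∀ i, F i ∈ H.edgeSet)
    (hsep : ∀ i j, i ≠ j → c i = c j → ∀ w ∈ F i, ∀ w' ∈ F j, w ≠ w' ∧ ¬ H.Adj w w') :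
    Fintype.card ι ≤ 2 * mim H := by
  have hclass (b : Bool) : (Finset.univ.filter (c · = b)).card ≤ mim H :=
    card_le_mim_of_separated _ F (fun i _ => hF i) fun i hi j hj hij =>
      hsep i j hij ((Finset.mem_filter.1 hi).2.trans (Finset.mem_filter.1 hj).2.symm)
  rw [← Finset.card_univ, ← Finset.card_filter_add_card_filter_not (p := (c · = true))]
  simp only [Bool.not_eq_true]
  linarith [hclass true, hclass false]

theorem mim_between_graphPow_le (G : SimpleGraph V) (s : Set V) (m : ℕ) :
    mim ((graphPow G m).between s sᶜ) ≤ 2 * mim (G.between s sᶜ) := by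
  refine mim_le fun M hM => ?_
  have hexit (e : M) : ∃ a b u v t,
      e.1 = s(a, b) ∧ a ∈ s ∧ b ∉ s ∧ IsExitEdge G s m a b u v t := by
    obtain ⟨a, b, he, ha, hb, hab⟩ := exists_eq_mk_of_mem_edgeSet_between (hM.1 e.2)
    obtain ⟨u, v, t, h⟩ := exists_isExitEdge_of_edist_le ha hb hab.2
    exact ⟨a, b, u, v, t, he, ha, hb, h⟩
  choose a b u v t he ha hb hexit using hexit
  have hfar (e f : M) (hef : e ≠ f) : ¬ G.edist (a e) (b f) ≤ m := fun hle =>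
    (hM.2 e e.2 f f.2 (Subtype.coe_ne_coe.2 hef) (a e) (he e ▸ Sym2.mem_mk_left _ _)
      (b f) (he f ▸ Sym2.mem_mk_right _ _)).2
      ⟨⟨ne_of_mem_of_not_mem (ha e) (hb f), hle⟩, .inl ⟨ha e, hb f⟩⟩
  rw [← Fintype.card_coe M]
  refine card_le_two_mul_mim_of_coloring (fun e => s(u e, v e)) (fun e => decide (t e % 2 = 0))
    (fun e => (hexit e).between_adj) fun e f hef hc w hw w' hw' => ?_
  have ht : t e % 2 = t f % 2 := by simp only [decide_eq_decide] at hc; omega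
  by_contra hsep
  rcases (hexit e).edist_le_one_or_edist_le_one (hexit f) hw hw' (by tauto) with h | h
  · rcases (hexit e).edist_le_or_edist_le (hexit f) ht h with h' | h'
    exacts [hfar e f hef h', hfar f e hef.symm h']
  · rcases (hexit f).edist_le_or_edist_le (hexit e) ht.symm h with h' | h'
    exacts [hfar f e hef.symm h', hfar e f hef h']

theorem cutGraph_eq_between (G : SimpleGraph V) (σ : V ≃ Fin (Fintype.card V)) (i : ℕ) :
    cutGraph G σ i = G.between {v | (σ v : ℕ) < i} {v | (σ v : ℕ) < i}ᶜ := by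
  ext u v
  simp [cutGraph, between_adj, and_comm]

theorem mw_graphPow_le (G : SimpleGraph V) (σ : V ≃ Fin (Fintype.card V)) (m : ℕ) :
    mw (graphPow G m) σ ≤ 2 * mw G σ :=
  Finset.sup_le fun i hi => calc
    mim (cutGraph (graphPow G m) σ i) ≤ 2 * mim (cutGraph G σ i) := by
      simpa only [cutGraph_eq_between] using mim_between_graphPow_le G _ m
    _ ≤ 2 * mw G σ := Nat.mul_le_mul_left 2 (Finset.le_sup (f := fun i => mim (cutGraph G σ i)) hi)

theorem lmw_graphPow_le_general {V : Type*} [Fintype V] (G : SimpleGraph V) (m : ℕ) :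
    lmw (graphPow G m) ≤ 2 * lmw G := by
  obtain ⟨σ, hσ⟩ : ∃ σ : V ≃ Fin (Fintype.card V), mw G σ = lmw G :=
    Nat.sInf_mem (s := {n | ∃ σ : V ≃ Fin (Fintype.card V), mw G σ = n})
      ⟨_, Fintype.equivFin V, rfl⟩
  calc lmw (graphPow G m) ≤ mw (graphPow G m) σ := Nat.sInf_le ⟨σ, rfl⟩
    _ ≤ 2 * mw G σ := mw_graphPow_le G σ m
    _ = 2 * lmw G := by rw [hσ]

/-- For any graph `G` and any `m ≥ 1`, `lmw (Gᵐ) ≤ 2 · lmw G`. -/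
theorem lmw_graphPow_le {V : Type*} [Fintype V] (G : SimpleGraph V) (m : ℕ) (hm : 1 ≤ m) :
    lmw (graphPow G m) ≤ 2 * lmw G :=
  lmw_graphPow_le_general G m

end LMW
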